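/- (Lemma 4) There is a constant C > 0 depending only on α_1,…,α_m, β_1,…,β_m such that for every K > 0 and every sufficiently large n the following holds: if Z_1,…,Z_N are i.i.d. copies of Z with N = ⌊n/log³n⌋, then Pr( ∑_{j=1}^{N} Z_j ≥ (1/log² n) ∑_{i=1}^m β_i log(α_i/β_i) − K ) ≥ 1 − C/(K² log² n). -/

import Mathlib

/-! Chebyshev's inequality. With `t = log n / n`, `T = ∑ βᵢ log (αᵢ/βᵢ)` and
`V = ∑ βᵢ log² (αᵢ/βᵢ)`, one step has mean `t T` and variance at most `t V`. The sum of
`N = ⌊n / log³ n⌋` independent steps therefore has variance at most `N t V ≤ V / log² n`, and its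
mean `N t T` is within `|T| t = o(1)` of `T / log² n`, so a deviation of `K` below `T / log² n`
requires a deviation of `K / 2` from the mean, of probability at most `4 V / (K² log² n)`. -/

open MeasureTheory Finset Filter
open scoped Classical ENNReal

/-- Law of `Z`: value `log (p_k/q_k)` with probability `q_k`, `0` otherwise. -/
noncomputable def Zdist {m : ℕ} (p q : Fin m → ℝ) : Measure ℝ :=
  (1 - ∑ k, ENNReal.ofReal (q k)) • Measure.dirac 0
    + ∑ k, ENNReal.ofReal (q k) • Measure.dirac (Real.log (p k / q k))

open ProbabilityTheory

section Chebyshev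

variable {ι : Type*} [Fintype ι] {μ : Measure ℝ} [IsProbabilityMeasure μ]

lemma pi_meas_ge_le_card_mul_variance_div_sq (hμ : MemLp id 2 μ) {c : ℝ} (hc : 0 < c) :
    Measure.pi (fun _ : ι => μ) {f | c ≤ |∑ i, f i - Fintype.card ι * ∫ x, x ∂μ|}
      ≤ ENNReal.ofReal (Fintype.card ι * Var[id; μ] / c ^ 2) := by
  have hcoord : ∀ i, MemLp (fun f : ι → ℝ => f i) 2 (Measure.pi fun _ => μ) := fun i =>
    hμ.comp_measurePreserving (measurePreserving_eval _ i)
  have hsum : MemLp (∑ i, fun f : ι → ℝ => f i) 2 (Measure.pi fun _ => μ) :=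
    memLp_finsetSum' _ fun i _ => hcoord i
  have hmean : ∫ f : ι → ℝ, ∑ i, f i ∂(Measure.pi fun _ => μ) = Fintype.card ι * ∫ x, x ∂μ := by
    rw [integral_finsetSum _ fun i _ => (hcoord i).integrable one_le_two]
    simp_rw [integral_comp_eval (μ := fun _ : ι => μ) (f := fun x : ℝ => x)
      aestronglyMeasurable_id]
    simp
  have hvar : Var[∑ i, fun f : ι → ℝ => f i; Measure.pi fun _ => μ]
      = Fintype.card ι * Var[id; μ] := by
    simpa using variance_sum_pi (X := fun _ => id) fun _ => hμ
  simpa [hmean, hvar] using meas_ge_le_variance_div_sq hsum hc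

lemma one_sub_le_measure_pi_sum_ge (hμ : MemLp id 2 μ) {a K : ℝ} (hK : 0 < K)
    (ha : |a - Fintype.card ι * ∫ x, x ∂μ| ≤ K / 2) :
    1 - ENNReal.ofReal (4 * (Fintype.card ι * Var[id; μ]) / K ^ 2)
      ≤ Measure.pi (fun _ : ι => μ) {f | a - K ≤ ∑ i, f i} := by
  set P := Measure.pi fun _ : ι => μ
  have hmeas : MeasurableSet {f : ι → ℝ | a - K ≤ ∑ i, f i} :=
    measurableSet_le measurable_const (by fun_prop)
  have hcompl : {f : ι → ℝ | a - K ≤ ∑ i, f i}ᶜ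
      ⊆ {f | K / 2 ≤ |∑ i, f i - Fintype.card ι * ∫ x, x ∂μ|} := by
    intro f hf
    simp only [Set.mem_compl_iff, Set.mem_ofPred_eq, not_le] at hf ⊢
    rw [abs_le] at ha
    rw [abs_sub_comm]
    exact le_abs.mpr (Or.inl (by linarith))
  have hbad : P {f | a - K ≤ ∑ i, f i}ᶜ
      ≤ ENNReal.ofReal (4 * (Fintype.card ι * Var[id; μ]) / K ^ 2) :=
    calc P {f | a - K ≤ ∑ i, f i}ᶜ ≤ _ := measure_mono hcompl
      _ ≤ _ := pi_meas_ge_le_card_mul_variance_div_sq hμ (half_pos hK)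
      _ = _ := by congr 1; ring
  rw [tsub_le_iff_right, ← prob_add_prob_compl (μ := P) hmeas]
  gcongr

end Chebyshev

section Zdist

variable {m : ℕ} (p q : Fin m → ℝ)

lemma isProbabilityMeasure_Zdist (hq : ∀ k, 0 ≤ q k) (hq₁ : ∑ k, q k ≤ 1) :
    IsProbabilityMeasure (Zdist p q) := by
  have hsum : ∑ k, ENNReal.ofReal (q k) ≤ 1 := by
    rw [← ENNReal.ofReal_sum_of_nonneg fun k _ => hq k]
    exact ENNReal.ofReal_le_one.mpr hq₁
  constructor
  simp only [Zdist, Measure.add_apply, Measure.smul_apply, Measure.finsetSum_apply,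
    measure_univ, smul_eq_mul, mul_one]
  exact tsub_add_cancel_of_le hsum

lemma integrable_Zdist (φ : ℝ → ℝ) : Integrable φ (Zdist p q) := by
  have hdirac : ∀ x, Integrable φ (Measure.dirac x) := fun x => integrable_dirac enorm_lt_top
  rw [Zdist, integrable_add_measure, integrable_finsetSum_measure]
  exact ⟨(hdirac 0).smul_measure (by simp), fun k _ => (hdirac _).smul_measure (by simp)⟩

lemma integral_Zdist (hq : ∀ k, 0 ≤ q k) (hq₁ : ∑ k, q k ≤ 1) (φ : ℝ → ℝ) :
    ∫ x, φ x ∂Zdist p q = (1 - ∑ k, q k) * φ 0 + ∑ k, q k * φ (Real.log (p k / q k)) := by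
  have hdirac : ∀ (c : ℝ≥0∞) x, c ≠ ∞ → Integrable φ (c • Measure.dirac x) := fun c x hc =>
    (integrable_dirac enorm_lt_top).smul_measure hc
  rw [Zdist, integral_add_measure (hdirac _ _ (by simp))
    (integrable_finsetSum_measure.mpr fun k _ => hdirac _ _ ENNReal.ofReal_ne_top),
    integral_finsetSum_measure fun k _ => hdirac _ _ ENNReal.ofReal_ne_top]
  simp only [integral_smul_measure, integral_dirac, smul_eq_mul, ENNReal.toReal_ofReal (hq _)]
  rw [← ENNReal.ofReal_sum_of_nonneg fun k _ => hq k, ← ENNReal.ofReal_one,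
    ← ENNReal.ofReal_sub _ (sum_nonneg fun k _ => hq k), ENNReal.toReal_ofReal (by linarith)]

lemma memLp_two_Zdist : MemLp id 2 (Zdist p q) :=
  (memLp_two_iff_integrable_sq aestronglyMeasurable_id).mpr (integrable_Zdist p q _)

end Zdist

lemma integral_Zdist_mul {m : ℕ} (α : Fin m → ℝ) {β : Fin m → ℝ} {t : ℝ} (hβ : ∀ i, 0 ≤ β i)
    (ht : 0 < t) (ht₁ : t * ∑ i, β i ≤ 1) {φ : ℝ → ℝ} (hφ : φ 0 = 0) :
    ∫ y, φ y ∂Zdist (fun i => α i * t) (fun i => β i * t)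
      = t * ∑ i, β i * φ (Real.log (α i / β i)) := by
  rw [integral_Zdist _ _ (fun i => mul_nonneg (hβ i) ht.le) (by rwa [← sum_mul, mul_comm]), hφ,
    mul_zero, zero_add, mul_sum]
  simp only [mul_div_mul_right _ _ ht.ne']
  exact sum_congr rfl fun i _ => by ring

lemma one_sub_le_measure_pi_Zdist {m : ℕ} (α β : Fin m → ℝ) {K L x : ℝ} (hK : 0 < K)
    (hL : 0 < L) (hx : 0 < x) (hβ : ∀ i, 0 ≤ β i) (hx₁ : L / x * ∑ i, β i ≤ 1)
    (hxK : |∑ i, β i * Real.log (α i / β i)| * (L / x) ≤ K / 2) :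
    1 - ENNReal.ofReal (4 * (∑ i, β i * Real.log (α i / β i) ^ 2) / (K ^ 2 * L ^ 2))
      ≤ Measure.pi (fun _ : Fin ⌊x / L ^ 3⌋₊ =>
          Zdist (fun i => α i * L / x) (fun i => β i * L / x))
        {f | 1 / L ^ 2 * ∑ i, β i * Real.log (α i / β i) - K ≤ ∑ j, f j} := by
  set T := ∑ i, β i * Real.log (α i / β i)
  set V := ∑ i, β i * Real.log (α i / β i) ^ 2
  set t := L / x with ht_def
  set N := ⌊x / L ^ 3⌋₊
  have ht : 0 < t := div_pos hL hx
  have hscale : ∀ γ : Fin m → ℝ, (fun i => γ i * L / x) = fun i => γ i * t := fun γ =>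
    funext fun i => mul_div_assoc _ _ _
  rw [hscale, hscale]
  have : IsProbabilityMeasure (Zdist (fun i => α i * t) (fun i => β i * t)) :=
    isProbabilityMeasure_Zdist _ _ (fun i => mul_nonneg (hβ i) ht.le)
      (by rwa [← sum_mul, mul_comm])
  have hmean : ∫ y, y ∂Zdist (fun i => α i * t) (fun i => β i * t) = t * T :=
    integral_Zdist_mul α hβ ht hx₁ (φ := id) rfl
  have hvar : Var[id; Zdist (fun i => α i * t) (fun i => β i * t)] ≤ t * V :=
    (variance_le_expectation_sq aestronglyMeasurable_id).trans_eq
      (integral_Zdist_mul α hβ ht hx₁ (φ := fun y => y ^ 2) (by simp))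
  have hN : (N : ℝ) ≤ x / L ^ 3 := Nat.floor_le (by positivity)
  have hN' : x / L ^ 3 < N + 1 := Nat.lt_floor_add_one _
  have hxL : x / L ^ 3 * t = 1 / L ^ 2 := by rw [ht_def]; field_simp
  refine le_trans (tsub_le_tsub_left (ENNReal.ofReal_le_ofReal ?_) 1)
    (one_sub_le_measure_pi_sum_ge (memLp_two_Zdist _ _) hK ?_)
  · have hNvar : N * Var[id; Zdist (fun i => α i * t) (fun i => β i * t)] ≤ V / L ^ 2 :=
      calc _ ≤ x / L ^ 3 * (t * V) := mul_le_mul hN hvar (variance_nonneg _ _) (by positivity)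
        _ = V / L ^ 2 := by rw [← mul_assoc, hxL, one_div_mul_eq_div]
    calc 4 * (Fintype.card (Fin N) * Var[id; _]) / K ^ 2 ≤ 4 * (V / L ^ 2) / K ^ 2 := by
          rw [Fintype.card_fin]; gcongr
      _ = 4 * V / (K ^ 2 * L ^ 2) := by ring
  · calc |1 / L ^ 2 * T - Fintype.card (Fin N) * ∫ y, y ∂Zdist _ _|
          = |T| * t * |x / L ^ 3 - N| := by
            rw [Fintype.card_fin, hmean, ← hxL,
              show x / L ^ 3 * t * T - N * (t * T) = T * t * (x / L ^ 3 - N) by ring,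
              abs_mul, abs_mul, abs_of_pos ht]
      _ ≤ |T| * t * 1 := by
            gcongr
            rw [abs_le]
            constructor <;> linarith
      _ ≤ K / 2 := by rwa [mul_one]

lemma tendsto_log_natCast_div_natCast :
    Tendsto (fun n : ℕ => Real.log n / n) atTop (nhds 0) := by
  simpa [Function.comp_def] using
    Real.isLittleO_log_id_atTop.tendsto_div_nhds_zero.comp tendsto_natCast_atTop_atTop

theorem lemma4_general (m : ℕ) (α β : Fin m → ℝ) (hβ : ∀ i, 0 < β i) :
    ∃ C : ℝ, 0 < C ∧ ∀ K : ℝ, 0 < K → ∃ N₀ : ℕ, ∀ n : ℕ, N₀ ≤ n →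
      1 - ENNReal.ofReal (C / (K ^ 2 * (Real.log n) ^ 2)) ≤
      Measure.pi (fun _ : Fin (Nat.floor ((n : ℝ) / (Real.log n) ^ 3)) =>
          Zdist (fun i => α i * Real.log n / n) (fun i => β i * Real.log n / n))
        {f | (1 / (Real.log n) ^ 2) * ∑ i, β i * Real.log (α i / β i) - K ≤ ∑ j, f j} := by
  set T := ∑ i, β i * Real.log (α i / β i)
  set V := ∑ i, β i * Real.log (α i / β i) ^ 2
  have hV : 0 ≤ V := sum_nonneg fun i _ => mul_nonneg (hβ i).le (sq_nonneg _)
  refine ⟨4 * V + 1, by positivity, fun K hK => ?_⟩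
  have hsmall := tendsto_log_natCast_div_natCast
  obtain ⟨N₀, hN₀⟩ := eventually_atTop.mp <|
    ((hsmall.mul_const (∑ i, β i)).eventually_le_const (show 0 * ∑ i, β i < 1 by simp)).and <|
    ((hsmall.const_mul |T|).eventually_le_const (show |T| * 0 < K / 2 by simpa using hK)).and <|
    eventually_ge_atTop 2
  refine ⟨N₀, fun n hn => ?_⟩
  obtain ⟨hn₁, hnK, hn₂⟩ := hN₀ n hn
  have hlog : 0 < Real.log n := Real.log_pos (by exact_mod_cast hn₂)
  refine le_trans (tsub_le_tsub_left (ENNReal.ofReal_le_ofReal ?_) 1)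
    (one_sub_le_measure_pi_Zdist α β hK hlog (by positivity) (fun i => (hβ i).le) hn₁ hnK)
  gcongr
  linarith

theorem lemma4 (m : ℕ) (hm : 0 < m) (α β : Fin m → ℝ)
    (hα : ∀ i, 0 < α i) (hβ : ∀ i, 0 < β i) (hne : ∃ i, α i ≠ β i) :
    ∃ C : ℝ, 0 < C ∧ ∀ K : ℝ, 0 < K → ∃ N₀ : ℕ, ∀ n : ℕ, N₀ ≤ n →
      1 - ENNReal.ofReal (C / (K ^ 2 * (Real.log n) ^ 2)) ≤
      Measure.pi (fun _ : Fin (Nat.floor ((n : ℝ) / (Real.log n) ^ 3)) =>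
          Zdist (fun i => α i * Real.log n / n) (fun i => β i * Real.log n / n))
        {f | (1 / (Real.log n) ^ 2) * ∑ i, β i * Real.log (α i / β i) - K ≤ ∑ j, f j} :=
  lemma4_general m α β hβ
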